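/- Let t(q) = log q + 2·Σ_{n≥1} ((2n-1)!/(n!)²) q^n. Then exp(t(q) - log q) = exp(2 Σ_{n≥1} ((2n-1)!/(n!)²) q^n) equals 1/(1/2 + (1/2)√(1-4q))², i.e. the mirror map of O ⊕ O(-2) → P¹ satisfies e^t = q / ((1 + √(1-4q))/2)² as an identity of formal power series in q (after expanding √(1-4q) = Σ binomial series). -/

import Mathlib

/-!
Write `S = √(1-4q)` and `F = exp ∘ g` with `g = t - log q`. Since `F' = g' F`, it suffices that
`(1 + S)² F` has derivative zero, i.e. `g' (1 + S) = -2 S'`. Differentiating `S² = 1 - 4q` gives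
`S S' = -2`, so after multiplying by `q S` this becomes `(1 + q g') S = 1`. Termwise,
`1 + q g' = Σ binom(2n, n) qⁿ`, which is the binomial series of `(1 - 4q)^(-1/2)`. Both `S² = 1 - 4q`
and `(1 - 4q)^(-1/2) · S = 1` are then `(1 + X)^a (1 + X)^b = (1 + X)^(a + b)` rescaled by `X ↦ -4X`.
-/

open PowerSeries

/-- Formal composition `f ∘ g` of power series. -/
noncomputable def pcomp (f g : PowerSeries ℚ) : PowerSeries ℚ :=
  PowerSeries.mk fun n =>
    ∑ k ∈ Finset.range (n + 1), PowerSeries.coeff k f * PowerSeries.coeff n (g ^ k)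

/-- `2 Σ_{n≥1} ((2n-1)!/(n!)²) qⁿ`, i.e. `t(q) - log q` for the mirror map of `O⊕O(-2)→P¹`. -/
noncomputable def gSer : PowerSeries ℚ :=
  PowerSeries.mk fun n =>
    if n = 0 then 0 else 2 * ((2 * n - 1).factorial : ℚ) / ((n.factorial : ℚ)) ^ 2

/-- The formal binomial series `√(1-4q) = Σ_{n≥0} binom(1/2,n) (-4q)ⁿ`. -/
noncomputable def sqrtSer : PowerSeries ℚ :=
  PowerSeries.mk fun n =>
    (-4 : ℚ) ^ n * (∏ i ∈ Finset.range n, ((1 : ℚ) / 2 - i)) / (n.factorial : ℚ)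

theorem Ring.choose_eq_prod_range_sub_div {K : Type*} [Field K] [CharZero K] (r : K) (n : ℕ) :
    Ring.choose r n = (∏ i ∈ Finset.range n, (r - i)) / n.factorial := by
  rw [Ring.choose_eq_smul, ← descPochhammer_eval_eq_prod_range, ← Polynomial.aeval_eq_smeval,
    ← descPochhammer_map (algebraMap ℤ K), Polynomial.eval_map_algebraMap, smul_eq_mul,
    div_eq_inv_mul]

theorem PowerSeries.coeff_pow_eq_zero_of_lt {R : Type*} [CommSemiring R] {g : R⟦X⟧}
    (hg : constantCoeff g = 0) {n k : ℕ} (hnk : n < k) : coeff n (g ^ k) = 0 :=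
  coeff_of_lt_order n <| (Nat.cast_lt.mpr hnk).trans_le (le_order_pow_of_constantCoeff_eq_zero k hg)

@[simp]
theorem PowerSeries.derivative_ofNat {R : Type*} [CommSemiring R] (n : ℕ) [n.AtLeastTwo] :
    d⁄dX R (ofNat(n) : R⟦X⟧) = 0 :=
  (d⁄dX R).map_natCast n

theorem pcomp_eq_subst (f : ℚ⟦X⟧) {g : ℚ⟦X⟧} (hg : constantCoeff g = 0) :
    pcomp f g = f.subst g := by
  ext n
  rw [pcomp, coeff_mk, coeff_subst' (HasSubst.of_constantCoeff_zero' hg)]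
  refine (finsum_eq_sum_of_support_subset _ fun k hk => ?_).symm
  by_contra hkn
  exact hk (by simp only [coeff_pow_eq_zero_of_lt hg (by simpa using hkn), mul_zero])

theorem derivative_pcomp (f : ℚ⟦X⟧) {g : ℚ⟦X⟧} (hg : constantCoeff g = 0) :
    d⁄dX ℚ (pcomp f g) = pcomp (d⁄dX ℚ f) g * d⁄dX ℚ g := by
  rw [pcomp_eq_subst _ hg, pcomp_eq_subst _ hg,
    derivative_subst (HasSubst.of_constantCoeff_zero' hg)]

theorem constantCoeff_pcomp (f g : ℚ⟦X⟧) : constantCoeff (pcomp f g) = constantCoeff f := by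
  rw [← coeff_zero_eq_constantCoeff_apply, ← coeff_zero_eq_constantCoeff_apply, pcomp, coeff_mk]
  simp

theorem sqrtSer_eq_rescale_binomialSeries :
    sqrtSer = rescale (-4) (binomialSeries ℚ (1 / 2 : ℚ)) := by
  ext n
  rw [sqrtSer, coeff_mk, coeff_rescale, binomialSeries_coeff, smul_eq_mul, mul_one,
    Ring.choose_eq_prod_range_sub_div, mul_div_assoc]

theorem sqrtSer_sq : sqrtSer ^ 2 = 1 - 4 * X := by
  rw [sqrtSer_eq_rescale_binomialSeries, ← map_pow, sq, ← binomialSeries_add, add_halves,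
    ← Nat.cast_one, binomialSeries_nat, pow_one, map_add, map_one, rescale_X]
  simp [sub_eq_add_neg, map_ofNat]

theorem Nat.centralBinom_eq_neg_four_pow_mul_choose (n : ℕ) :
    (n.centralBinom : ℚ) = (-4) ^ n * Ring.choose (-1 / 2 : ℚ) n := by
  induction n with
  | zero => simp
  | succ n ih =>
    have hsucc : ((n + 1).centralBinom : ℚ) = 2 * (2 * n + 1) * n.centralBinom / (n + 1) := by
      rw [eq_div_iff (by positivity)]
      exact_mod_cast (mul_comm _ _).trans (Nat.succ_mul_centralBinom_succ n)
    rw [Ring.choose_eq_prod_range_sub_div] at ih ⊢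
    rw [hsucc, ih, Finset.prod_range_succ, Nat.factorial_succ]
    push_cast
    field_simp
    ring

theorem rescale_binomialSeries_neg_half :
    rescale (-4) (binomialSeries ℚ (-1 / 2 : ℚ)) = mk fun n => (n.centralBinom : ℚ) := by
  ext n
  rw [coeff_rescale, binomialSeries_coeff, smul_eq_mul, mul_one, coeff_mk,
    Nat.centralBinom_eq_neg_four_pow_mul_choose]

theorem one_add_X_mul_derivative_gSer :
    1 + X * d⁄dX ℚ gSer = mk fun n => (n.centralBinom : ℚ) := by
  ext (_ | n)
  · simp
  · rw [map_add, coeff_one, if_neg n.succ_ne_zero, zero_add, coeff_succ_X_mul, coeff_derivative,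
      gSer, coeff_mk, coeff_mk, if_neg n.succ_ne_zero, Nat.centralBinom_eq_two_mul_choose,
      Nat.cast_choose ℚ (by omega), show 2 * (n + 1) - 1 = 2 * n + 1 by omega,
      show 2 * (n + 1) - (n + 1) = n + 1 by omega, show 2 * (n + 1) = 2 * n + 1 + 1 by omega,
      Nat.factorial_succ (2 * n + 1)]
    push_cast
    field_simp
    ring

theorem sqrtSer_mul_one_add_X_mul_derivative_gSer :
    sqrtSer * (1 + X * d⁄dX ℚ gSer) = 1 := by
  rw [sqrtSer_eq_rescale_binomialSeries, one_add_X_mul_derivative_gSer,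
    ← rescale_binomialSeries_neg_half, ← map_mul, ← binomialSeries_add]
  norm_num

theorem constantCoeff_gSer : constantCoeff gSer = 0 := by
  rw [← coeff_zero_eq_constantCoeff_apply, gSer, coeff_mk, if_pos rfl]

theorem constantCoeff_sqrtSer : constantCoeff sqrtSer = 1 := by
  rw [← coeff_zero_eq_constantCoeff_apply, sqrtSer, coeff_mk]
  simp

theorem derivative_gSer_mul_one_add_sqrtSer :
    d⁄dX ℚ gSer * (1 + sqrtSer) = -2 * d⁄dX ℚ sqrtSer := by
  have hXS : X * sqrtSer ≠ 0 :=
    mul_ne_zero X_ne_zero fun h => by simpa [h] using constantCoeff_sqrtSer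
  have hS' : 2 * (sqrtSer * d⁄dX ℚ sqrtSer) = -4 := by
    simpa [derivative_pow] using congrArg (d⁄dX ℚ) sqrtSer_sq
  refine mul_left_cancel₀ hXS ?_
  linear_combination (1 + sqrtSer) * sqrtSer_mul_one_add_X_mul_derivative_gSer + X * hS' -
    sqrtSer_sq

/-- The mirror map of `O ⊕ O(-2) → P¹` satisfies
`exp(t - log q) = 1/((1+√(1-4q))/2)²`, i.e. `exp(g) · (1+√(1-4q))² = 4`. -/
theorem mirror_map_algebraic :
    pcomp (PowerSeries.exp ℚ) gSer * (1 + sqrtSer) ^ 2 = 4 := by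
  apply derivative.ext
  · rw [Derivation.leibniz, derivative_pow, derivative_pcomp _ constantCoeff_gSer, derivative_exp,
      derivative_ofNat, map_add, Derivation.map_one_eq_zero, smul_eq_mul, smul_eq_mul]
    linear_combination (pcomp (exp ℚ) gSer * (1 + sqrtSer)) * derivative_gSer_mul_one_add_sqrtSer
  · norm_num [constantCoeff_pcomp, constantCoeff_sqrtSer, map_ofNat]
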